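/- arXiv:math/9803071 — 3 statements merged into one kernel-verified Lean document; each statement's English description precedes it below -/
import Mathlib

section
/- Let G ⊂ GL(n,ℂ) be a finite abelian group of diagonal matrices, with each g ∈ G having eigenvalues e^{2πiα_i(g)}, α_i(g) ∈ [0,1) ∩ ℚ. Let N = ℤ^n + Σ_{g∈G} ℤ·(α_1(g),…,α_n(g)) ⊂ ℚ^n, σ = ℝ_{≥0}^n, and φ : ℝ^n → ℝ the linear form with φ(e_i) = 1. Assume the action is faithful. Then for real q > 1: (q-1)^n · Σ_{p ∈ N ∩ σ} q^{-φ(p)} = q^n · Σ_{g ∈ G} q^{-Σ_i α_i(g)}. -/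
open Real
set_option maxHeartbeats 1000000

lemma geom_pi_aux {r : ℝ} (h0 : 0 ≤ r) (h1 : r < 1) (k : ℕ) :
    Summable (fun m : Fin k → ℕ => ∏ i, r ^ (m i)) ∧
    ∑' m : Fin k → ℕ, ∏ i, r ^ (m i) = ((1 - r)⁻¹) ^ k := by
  induction k with
  | zero =>
    constructor
    · exact Summable.of_finite
    · rw [tsum_eq_single (fun i => 0) (by intro b hb; exact absurd (Subsingleton.elim b _) hb)]
      simp
  | succ k ih =>
    have hfe : ∀ p : ℕ × (Fin k → ℕ),
        (∏ i, r ^ ((Fin.consEquiv (fun _ => ℕ)) p i)) = r ^ p.1 * ∏ i, r ^ (p.2 i) := by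
      rintro ⟨a, m⟩
      rw [Fin.prod_univ_succ]
      simp [Fin.consEquiv]
    have hsum2 : Summable (fun p : ℕ × (Fin k → ℕ) => r ^ p.1 * ∏ i, r ^ (p.2 i)) := by
      apply Summable.mul_of_nonneg (summable_geometric_of_lt_one h0 h1) ih.1
      · exact fun a => pow_nonneg h0 a
      · exact fun m => Finset.prod_nonneg fun i _ => pow_nonneg h0 _
    have hsf : Summable (fun m : Fin (k+1) → ℕ => ∏ i, r ^ (m i)) := by
      rw [← (Fin.consEquiv (fun _ => ℕ)).summable_iff]
      exact hsum2.congr (fun p => (hfe p).symm)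
    refine ⟨hsf, ?_⟩
    rw [← (Fin.consEquiv (fun _ => ℕ)).tsum_eq (fun m : Fin (k+1) → ℕ => ∏ i, r ^ (m i))]
    calc ∑' p : ℕ × (Fin k → ℕ), ∏ i, r ^ ((Fin.consEquiv (fun _ => ℕ)) p i)
        = ∑' p : ℕ × (Fin k → ℕ), r ^ p.1 * ∏ i, r ^ (p.2 i) := tsum_congr hfe
      _ = (∑' a : ℕ, r ^ a) * ∑' m : Fin k → ℕ, ∏ i, r ^ (m i) :=
          (Summable.tsum_mul_tsum (summable_geometric_of_lt_one h0 h1) ih.1 hsum2).symm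
      _ = ((1 - r)⁻¹) ^ (k + 1) := by
          rw [tsum_geometric_of_lt_one h0 h1, ih.2, pow_succ, mul_comm]

/-- Stringy E-function of a diagonal abelian quotient singularity equals the orbifold
E-function.  A finite abelian group `G` of diagonal matrices is encoded by the exponents
`α g i ∈ [0,1) ∩ ℚ` of the eigenvalues `e^{2πi α_i(g)}`; faithfulness is injectivity of
`α`, the lattice is `N = ℤ^n + ∑_g ℤ·α(g)`, `σ = ℝ^n_{≥0}` and `φ(e_i) = 1`.  Then for
real `q > 1`:
`(q-1)^n · ∑_{p ∈ N ∩ σ} q^{-φ(p)} = q^n · ∑_{g ∈ G} q^{-∑_i α_i(g)}`. -/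
theorem stringy_eq_orbifold_abelian (n : ℕ) (G : Type*) [CommGroup G] [Fintype G]
    (α : G → Fin n → ℚ)
    (hrange : ∀ g i, 0 ≤ α g i ∧ α g i < 1)
    (hone : α 1 = 0)
    (hmul : ∀ g h i, α (g * h) i = Int.fract (α g i + α h i))
    (hfaithful : Function.Injective α)
    (N : AddSubgroup (Fin n → ℚ))
    (hN : N = AddSubgroup.closure
        ((Set.range fun i => (Pi.single i 1 : Fin n → ℚ)) ∪ Set.range α))
    (q : ℝ) (hq : 1 < q) :
    (q - 1) ^ n *
        ∑' p : {p : Fin n → ℚ // p ∈ N ∧ ∀ i, 0 ≤ p i},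
          q ^ (-(∑ i, ((p : Fin n → ℚ) i : ℝ)))
      = q ^ n * ∑ g : G, q ^ (-(∑ i, (α g i : ℝ))) := by
  have hq0 : (0:ℝ) < q := lt_trans one_pos hq
  have hinv : ∀ (g : G) (i : Fin n), (α g i) + α g⁻¹ i = (⌊α g i + α g⁻¹ i⌋ : ℚ) := by
    intro g i
    have h1 : Int.fract (α g i + α g⁻¹ i) = 0 := by
      rw [← hmul g g⁻¹ i, mul_inv_cancel, hone]; rfl
    have h2 := Int.floor_add_fract (α g i + α g⁻¹ i)
    rw [h1, add_zero] at h2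
    exact h2.symm
  have hintN : ∀ z : Fin n → ℤ, (fun i => (z i : ℚ)) ∈ N := by
    intro z
    have hz : (fun i => (z i : ℚ)) = ∑ i : Fin n, z i • (Pi.single i 1 : Fin n → ℚ) := by
      funext j
      simp [Pi.single_apply, Finset.sum_apply]
    rw [hz, hN]
    refine AddSubgroup.sum_mem _ (fun i _ => ?_)
    exact zsmul_mem (AddSubgroup.subset_closure
      (Set.mem_union_left _ (Set.mem_range_self i))) (z i)
  have hforward : ∀ (g : G) (z : Fin n → ℤ), (α g + fun i => (z i : ℚ)) ∈ N := by
    intro g z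
    exact N.add_mem (by rw [hN]; exact AddSubgroup.subset_closure (Or.inr ⟨g, rfl⟩)) (hintN z)
  have hmem : ∀ p ∈ N, ∃ (g : G) (z : Fin n → ℤ), p = α g + fun i => (z i : ℚ) := by
    intro p hp
    rw [hN] at hp
    refine AddSubgroup.closure_induction (fun x hx => ?_) ?_
      (fun x y hx hy ihx ihy => ?_) (fun x hx ihx => ?_) hp
    · rcases hx with ⟨i, rfl⟩ | ⟨g, rfl⟩
      · refine ⟨1, Pi.single i 1, ?_⟩
        funext j
        simp [hone, Pi.single_apply]
      · exact ⟨g, 0, by funext j; simp⟩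
    · exact ⟨1, 0, by funext j; simp [hone]⟩
    · obtain ⟨g, z, rfl⟩ := ihx
      obtain ⟨h, w, rfl⟩ := ihy
      refine ⟨g * h, fun i => z i + w i + ⌊α g i + α h i⌋, ?_⟩
      funext i
      have h3 := hmul g h i
      simp only [Pi.add_apply] at h3 ⊢
      rw [h3]
      unfold Int.fract
      push_cast
      ring
    · obtain ⟨g, z, rfl⟩ := ihx
      refine ⟨g⁻¹, fun i => -z i - ⌊α g i + α g⁻¹ i⌋, ?_⟩
      funext i
      have h4 := hinv g i
      simp only [Pi.neg_apply, Pi.add_apply]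
      push_cast
      linarith
  -- the bijection
  set T := {p : Fin n → ℚ // p ∈ N ∧ ∀ i, 0 ≤ p i} with hT
  set r : ℝ := q⁻¹ with hr
  have hr0 : (0:ℝ) ≤ r := by positivity
  have hr1 : r < 1 := by rw [hr]; exact inv_lt_one_of_one_lt₀ hq
  set c : G → ℝ := fun g => q ^ (-(∑ i, (α g i : ℝ))) with hc
  set f : T → ℝ := fun p => q ^ (-(∑ i, ((p : Fin n → ℚ) i : ℝ))) with hf
  let toFun : G × (Fin n → ℕ) → T := fun gm =>
    ⟨α gm.1 + fun i => ((gm.2 i : ℤ) : ℚ), hforward _ _,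
      fun i => by
        have := (hrange gm.1 i).1
        simp only [Pi.add_apply]
        push_cast
        positivity⟩
  have hinj : Function.Injective toFun := by
    rintro ⟨g, m⟩ ⟨h, m'⟩ heq
    have heq' : (α g + fun i => ((m i : ℤ) : ℚ)) = (α h + fun i => ((m' i : ℤ) : ℚ)) :=
      congrArg Subtype.val heq
    have hptw : ∀ i, α g i + (m i : ℚ) = α h i + (m' i : ℚ) := by
      intro i
      have := congrFun heq' i
      simpa using this
    have hmm : m = m' := by
      funext i
      have h1 := (hrange g i).1
      have h2 := (hrange g i).2
      have h3 := (hrange h i).1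
      have h4 := (hrange h i).2
      have h5 := hptw i
      have h6 : ((m i : ℤ) : ℚ) - ((m' i : ℤ) : ℚ) < 1 := by push_cast; linarith
      have h7 : (-1 : ℚ) < ((m i : ℤ) : ℚ) - ((m' i : ℤ) : ℚ) := by push_cast; linarith
      have h8 : ((m i : ℤ) - (m' i : ℤ) : ℤ) < 1 := by exact_mod_cast (by push_cast; linarith : ((m i : ℤ) - (m' i : ℤ) : ℚ) < 1)
      have h9 : (-1 : ℤ) < ((m i : ℤ) - (m' i : ℤ) : ℤ) := by exact_mod_cast (by push_cast; linarith : (-1 : ℚ) < ((m i : ℤ) - (m' i : ℤ) : ℚ))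
      omega
    subst hmm
    have hgh : g = h := by
      apply hfaithful
      funext i
      have := hptw i
      linarith
    rw [hgh]
  have hsurj : Function.Surjective toFun := by
    rintro ⟨p, hpN, hpnn⟩
    obtain ⟨g, z, rfl⟩ := hmem p hpN
    have hznn : ∀ i, 0 ≤ z i := by
      intro i
      have h1 := hpnn i
      have h2 := (hrange g i).2
      simp only [Pi.add_apply] at h1
      have h3 : (-1 : ℚ) < (z i : ℚ) := by linarith
      have h4 : (-1 : ℤ) < z i := by exact_mod_cast h3
      omega
    refine ⟨⟨g, fun i => (z i).toNat⟩, ?_⟩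
    apply Subtype.ext
    show (α g + fun i => (((z i).toNat : ℤ) : ℚ)) = α g + fun i => (z i : ℚ)
    congr 1
    funext i
    rw [Int.toNat_of_nonneg (hznn i)]
  let e : (G × (Fin n → ℕ)) ≃ T := Equiv.ofBijective toFun ⟨hinj, hsurj⟩
  -- term computation
  have hterm : ∀ (g : G) (m : Fin n → ℕ), f (toFun (g, m)) = c g * ∏ i, r ^ (m i) := by
    intro g m
    show q ^ (-(∑ i, ((α g i + ((m i : ℤ) : ℚ) : ℚ) : ℝ))) = c g * ∏ i, r ^ (m i)
    have hsplit : (∑ i, ((α g i + ((m i : ℤ) : ℚ) : ℚ) : ℝ))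
        = (∑ i, (α g i : ℝ)) + ((∑ i, m i : ℕ) : ℝ) := by
      push_cast
      rw [Finset.sum_add_distrib]
    rw [hsplit, neg_add, rpow_add hq0, hc]
    congr 1
    rw [rpow_neg hq0.le, rpow_natCast, ← inv_pow, Finset.prod_pow_eq_pow_sum]
  -- summability and product of sums
  have hsumc : Summable c := Summable.of_finite
  have hsumh : Summable (fun m : Fin n → ℕ => ∏ i, r ^ (m i)) := (geom_pi_aux hr0 hr1 n).1
  have hcnn : ∀ g, 0 ≤ c g := fun g => (rpow_pos_of_pos hq0 _).le
  have hsum2 : Summable (fun gm : G × (Fin n → ℕ) => c gm.1 * ∏ i, r ^ (gm.2 i)) := by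
    apply Summable.mul_of_nonneg hsumc hsumh
    · exact hcnn
    · exact fun m => Finset.prod_nonneg fun i _ => pow_nonneg hr0 _
  have h1 : ∑' p : T, f p = (∑ g : G, c g) * ((1 - r)⁻¹) ^ n := by
    calc ∑' p : T, f p = ∑' gm : G × (Fin n → ℕ), f (e gm) := (e.tsum_eq f).symm
      _ = ∑' gm : G × (Fin n → ℕ), c gm.1 * ∏ i, r ^ (gm.2 i) :=
          tsum_congr (fun gm => hterm gm.1 gm.2)
      _ = (∑' g : G, c g) * ∑' m : Fin n → ℕ, ∏ i, r ^ (m i) :=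
          (Summable.tsum_mul_tsum hsumc hsumh hsum2).symm
      _ = (∑ g : G, c g) * ((1 - r)⁻¹) ^ n := by
          rw [tsum_fintype, (geom_pi_aux hr0 hr1 n).2]
  have hpow : (q - 1) ^ n * ((1 - r)⁻¹) ^ n = q ^ n := by
    rw [← mul_pow]
    congr 1
    rw [hr]
    have hq1 : q - 1 ≠ 0 := by linarith
    have hqne : q ≠ 0 := ne_of_gt hq0
    field_simp
  calc (q - 1) ^ n * ∑' p : T, f p
      = (q - 1) ^ n * ((∑ g : G, c g) * ((1 - r)⁻¹) ^ n) := by rw [h1]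
    _ = ((q - 1) ^ n * ((1 - r)⁻¹) ^ n) * ∑ g : G, c g := by ring
    _ = q ^ n * ∑ g : G, c g := by rw [hpow]
end

section
/- Let G ⊂ SL(n,ℂ) be a finite subgroup, and for g ∈ G with eigenvalues e^{2πiα_i(g)} (α_i(g) ∈ [0,1)∩ℚ) define wt(g) = Σ_i α_i(g) and k(g) = dim ker(g - id). Then Σ_{g ∈ G} q^{wt(g) + k(g)} = Σ_{g ∈ G} q^{n - wt(g)} for any q > 0. Consequently, Σ_{g∈G} q^{n - wt(g)} = Σ_{i=0}^{n} c_i q^{n-i} where c_i = #{g ∈ G : wt(g) = i}, and all weights wt(g) are nonnegative integers. -/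
open Real

/-- For a finite subgroup `G ⊂ SL(n, ℂ)` encoded by the eigenvalue exponents
`α g i ∈ [0,1) ∩ ℚ` (with `det g = 1` giving `wt(g) = ∑_i α_i(g) ∈ ℤ`), setting
`k(g) = dim ker(g - id) = #{i : α_i(g) = 0}`, one has
`∑_g q^{wt(g)+k(g)} = ∑_g q^{n-wt(g)}` for every `q > 0`, all weights are nonnegative
integers, and `∑_g q^{n - wt(g)} = ∑_{i=0}^{n} c_i q^{n-i}` with
`c_i = #{g : wt(g) = i}`. -/
theorem orbifold_E_poincare (n : ℕ) (G : Type*) [Group G] [Fintype G] [DecidableEq G]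
    (α : G → Fin n → ℚ)
    (hrange : ∀ g i, 0 ≤ α g i ∧ α g i < 1)
    (hone : α 1 = 0)
    (hmul : ∀ g h i, α (g * h) i = Int.fract (α g i + α h i))
    (hfaithful : Function.Injective α)
    (hdet : ∀ g, ∃ m : ℤ, (∑ i, α g i) = m)
    (q : ℝ) (hq : 0 < q) :
    (∀ g : G, ∃ m : ℕ, (∑ i, α g i) = m) ∧
    (∑ g : G, q ^ (((∑ i, α g i : ℚ) : ℝ) +
          ((Finset.univ.filter fun i => α g i = 0).card : ℝ))
        = ∑ g : G, q ^ ((n : ℝ) - ((∑ i, α g i : ℚ) : ℝ))) ∧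
    (∑ g : G, q ^ ((n : ℝ) - ((∑ i, α g i : ℚ) : ℝ))
        = ∑ i ∈ Finset.range (n + 1),
            ((Finset.univ.filter fun g : G => (∑ j, α g j) = (i : ℚ)).card : ℝ) *
              q ^ ((n : ℝ) - (i : ℝ))) := by
  classical
  have hnonneg : ∀ g : G, (0:ℚ) ≤ ∑ i, α g i := fun g =>
    Finset.sum_nonneg fun i _ => (hrange g i).1
  have hnat : ∀ g : G, ∃ m : ℕ, (∑ i, α g i) = m := by
    intro g
    obtain ⟨m, hm⟩ := hdet g
    have h0 : (0:ℚ) ≤ (m:ℚ) := hm ▸ hnonneg g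
    have h0' : (0:ℤ) ≤ m := by exact_mod_cast h0
    refine ⟨m.toNat, ?_⟩
    rw [hm]
    exact_mod_cast (Int.toNat_of_nonneg h0').symm
  -- eigenvalues of the inverse
  have hinv : ∀ (g : G) (i : Fin n),
      α g⁻¹ i = if α g i = 0 then 0 else 1 - α g i := by
    intro g i
    have h0 : Int.fract (α g i + α g⁻¹ i) = 0 := by
      rw [← hmul, mul_inv_cancel]
      simp [hone]
    obtain ⟨h1, h2⟩ := hrange g i
    obtain ⟨h3, h4⟩ := hrange g⁻¹ i
    by_cases hc : α g i + α g⁻¹ i < 1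
    · have hs : α g i + α g⁻¹ i = 0 := by
        rw [Int.fract_eq_self.2 ⟨by linarith, hc⟩] at h0
        exact h0
      have hz : α g i = 0 := by linarith
      rw [if_pos hz]
      linarith
    · push_neg at hc
      have hfr : Int.fract (α g i + α g⁻¹ i) = α g i + α g⁻¹ i - 1 := by
        have := Int.fract_sub_intCast (α g i + α g⁻¹ i) 1
        rw [← this]
        push_cast
        rw [Int.fract_eq_self.2 ⟨by linarith, by linarith⟩]
      have hs : α g i + α g⁻¹ i = 1 := by rw [hfr] at h0; linarith
      have hz : α g i ≠ 0 := by
        intro h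
        rw [h] at hs
        linarith
      rw [if_neg hz]
      linarith
  -- the key identity wt g + wt g⁻¹ + k g = n  (in ℚ)
  have key : ∀ g : G, (∑ i, α g i) + (∑ i, α g⁻¹ i)
      + ((Finset.univ.filter fun i => α g i = 0).card : ℚ) = n := by
    intro g
    have : (∑ i, (α g i + α g⁻¹ i + (if α g i = 0 then (1:ℚ) else 0)))
        = ∑ _i : Fin n, (1:ℚ) := by
      refine Finset.sum_congr rfl fun i _ => ?_
      by_cases h : α g i = 0
      · rw [if_pos h, hinv g i, if_pos h, h]; ring
      · rw [if_neg h, hinv g i, if_neg h]; ring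
    simp only [Finset.sum_add_distrib, Finset.sum_ite_eq, Finset.sum_boole] at this
    simpa [Finset.sum_add_distrib, Finset.sum_boole] using this
  refine ⟨hnat, ?_, ?_⟩
  · refine Fintype.sum_equiv (Equiv.inv G) _ _ fun g => ?_
    have hk := key g
    congr 1
    have : ((Equiv.inv G) g) = g⁻¹ := rfl
    rw [this]
    have := congrArg (fun x : ℚ => (x : ℝ)) hk
    push_cast at this ⊢
    linarith
  · choose w hw using hnat
    have hwle : ∀ g : G, w g ≤ n := by
      intro g
      have h1 : (∑ i, α g i) ≤ n := by
        calc ∑ i, α g i ≤ ∑ _i : Fin n, (1:ℚ) :=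
              Finset.sum_le_sum fun i _ => le_of_lt (hrange g i).2
          _ = n := by simp
      rw [hw g] at h1
      exact_mod_cast h1
    have hfilter : ∀ i : ℕ, (Finset.univ.filter fun g : G => (∑ j, α g j) = (i:ℚ))
        = Finset.univ.filter fun g : G => w g = i := by
      intro i
      apply Finset.filter_congr
      intro g _
      rw [hw g]
      exact_mod_cast Iff.rfl
    have hexp : ∀ g : G, q ^ ((n:ℝ) - ((∑ i, α g i : ℚ) : ℝ))
        = q ^ ((n:ℝ) - (w g : ℝ)) := by
      intro g
      rw [hw g]
      push_cast
      ring_nf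
    calc (∑ g : G, q ^ ((n : ℝ) - ((∑ i, α g i : ℚ) : ℝ)))
        = ∑ g : G, q ^ ((n:ℝ) - (w g : ℝ)) := Finset.sum_congr rfl fun g _ => hexp g
      _ = ∑ i ∈ Finset.range (n + 1), ∑ g ∈ Finset.univ.filter fun g : G => w g = i,
            q ^ ((n:ℝ) - (w g : ℝ)) := by
          rw [Finset.sum_fiberwise_of_maps_to]
          intro g _
          exact Finset.mem_range.2 (Nat.lt_succ_of_le (hwle g))
      _ = ∑ i ∈ Finset.range (n + 1),
            ((Finset.univ.filter fun g : G => (∑ j, α g j) = (i : ℚ)).card : ℝ) *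
              q ^ ((n : ℝ) - (i : ℝ)) := by
          refine Finset.sum_congr rfl fun i _ => ?_
          rw [hfilter i]
          rw [Finset.sum_congr rfl (fun g hg => ?_), Finset.sum_const, nsmul_eq_mul]
          have : w g = i := (Finset.mem_filter.1 hg).2
          rw [this]
end

section
/- Let σ = ℝ_{≥0}^n ⊂ ℝ^n with lattice N ⊃ ℤ^n of finite index, and φ : ℝ^n → ℝ the linear form with φ(e_i) = 1 for the standard basis. Then lim_{q → 1⁺} (q-1)^n Σ_{p ∈ N ∩ σ} q^{-φ(p)} = [N : ℤ^n] · n! · vol_euclidean({x ∈ ℝ_{≥0}^n : Σx_i ≤ 1}) = [N : ℤ^n]. -/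
open Real Filter

lemma mem_latticeZ {n : ℕ} (p : Fin n → ℚ) :
    p ∈ AddSubgroup.closure (Set.range fun i => (Pi.single i 1 : Fin n → ℚ)) ↔
      ∀ i, ∃ m : ℤ, p i = m := by
  constructor
  · intro hp
    induction hp using AddSubgroup.closure_induction with
    | mem x hx =>
        obtain ⟨j, rfl⟩ := hx
        intro i
        rcases eq_or_ne i j with h | h
        · exact ⟨1, by simp [h, Pi.single_apply]⟩
        · exact ⟨0, by simp [Pi.single_apply, h]⟩
    | zero => exact fun i => ⟨0, by simp⟩
    | add a b _ _ ha hb =>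
        intro i
        obtain ⟨ma, hma⟩ := ha i; obtain ⟨mb, hmb⟩ := hb i
        exact ⟨ma + mb, by simp [hma, hmb]⟩
    | neg a _ ha =>
        intro i
        obtain ⟨ma, hma⟩ := ha i
        exact ⟨-ma, by simp [hma]⟩
  · intro h
    choose m hm using h
    have hp : p = ∑ j, Pi.single j ((m j : ℚ)) := by
      conv_lhs => rw [← Finset.univ_sum_single p]
      exact Finset.sum_congr rfl fun j _ => by rw [hm j]
    rw [hp]
    refine AddSubgroup.sum_mem _ fun j _ => ?_
    have : (Pi.single j ((m j : ℚ)) : Fin n → ℚ) = (m j) • Pi.single j (1 : ℚ) := by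
      rw [← Pi.single_smul, zsmul_eq_mul, mul_one]
    rw [this]
    exact AddSubgroup.zsmul_mem _ (AddSubgroup.subset_closure (Set.mem_range.mpr ⟨j, rfl⟩)) _


lemma geom_pi_hasSum {r : ℝ} (h0 : 0 ≤ r) (h1 : r < 1) :
    ∀ k : ℕ, HasSum (fun m : Fin k → ℕ => ∏ i, r ^ m i) ((1 - r)⁻¹ ^ k) := by
  intro k
  induction k with
  | zero =>
      simpa using hasSum_single (f := fun m : Fin 0 → ℕ => ∏ i, r ^ m i)
        (fun _ => 0) (fun b' hb' => absurd (Subsingleton.elim b' _) hb')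
  | succ k ih =>
      have hgeo : HasSum (fun m : ℕ => r ^ m) (1 - r)⁻¹ :=
        hasSum_geometric_of_lt_one h0 h1
      have hsummul : Summable fun x : ℕ × (Fin k → ℕ) => r ^ x.1 * ∏ i, r ^ x.2 i := by
        apply Summable.mul_of_nonneg hgeo.summable ih.summable
        · intro m; positivity
        · intro m; exact Finset.prod_nonneg fun i _ => pow_nonneg h0 _
      have hmul := hgeo.mul ih hsummul
      refine (Equiv.hasSum_iff (Fin.consEquiv (fun _ : Fin (k+1) => ℕ))).mp ?_
      have hcomp : (fun m : Fin (k+1) → ℕ => ∏ i, r ^ m i) ∘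
            (Fin.consEquiv (fun _ : Fin (k+1) => ℕ))
          = fun x : ℕ × (Fin k → ℕ) => r ^ x.1 * ∏ i, r ^ x.2 i := by
        funext x
        simp [Fin.consEquiv, Fin.prod_univ_succ]
      rw [hcomp]
      convert hmul using 1
      · rfl
      · ring


section Main

variable {n : ℕ} {N : AddSubgroup (Fin n → ℚ)}

private abbrev Zl (n : ℕ) : AddSubgroup (Fin n → ℚ) :=
  AddSubgroup.closure (Set.range fun i => (Pi.single i 1 : Fin n → ℚ))

private abbrev Ql (N : AddSubgroup (Fin n → ℚ)) := N ⧸ ((Zl n).addSubgroupOf N)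

private noncomputable def Fl (N : AddSubgroup (Fin n → ℚ)) (c : Ql N) : Fin n → ℚ :=
  fun i => Int.fract (((c.out : N) : Fin n → ℚ) i)

private lemma Fl_mk (p : N) : Fl N (QuotientAddGroup.mk p) = fun i => Int.fract ((p : Fin n → ℚ) i) := by
  have h1 : (QuotientAddGroup.mk ((QuotientAddGroup.mk p : Ql N).out) : Ql N)
      = QuotientAddGroup.mk p := QuotientAddGroup.out_eq' _
  have h2 : -((QuotientAddGroup.mk p : Ql N).out) + p ∈ (Zl n).addSubgroupOf N :=
    QuotientAddGroup.eq.mp h1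
  rw [AddSubgroup.mem_addSubgroupOf] at h2
  have h3 : ∀ i, ∃ m : ℤ, (-(((QuotientAddGroup.mk p : Ql N).out : N) : Fin n → ℚ)
      + (p : Fin n → ℚ)) i = m := (mem_latticeZ _).mp (by exact_mod_cast h2)
  funext i
  obtain ⟨m, hm⟩ := h3 i
  simp only [Pi.add_apply, Pi.neg_apply] at hm
  have : (p : Fin n → ℚ) i = (((QuotientAddGroup.mk p : Ql N).out : N) : Fin n → ℚ) i + m := by
    linarith
  rw [Fl, this, Int.fract_add_intCast]

private lemma Fl_mem (hsub : Zl n ≤ N) (c : Ql N) : Fl N c ∈ N := by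
  have : Fl N c = ((c.out : N) : Fin n → ℚ) - fun i => (⌊((c.out : N) : Fin n → ℚ) i⌋ : ℚ) := by
    funext i; simp only [Fl, Pi.sub_apply, ← Int.self_sub_floor]
  rw [this]
  exact sub_mem (c.out : N).2 (hsub ((mem_latticeZ _).mpr fun i => ⟨_, rfl⟩))

private lemma Fl_nonneg (c : Ql N) (i : Fin n) : 0 ≤ Fl N c i := Int.fract_nonneg _

private lemma Fl_lt_one (c : Ql N) (i : Fin n) : Fl N c i < 1 := Int.fract_lt_one _

/-- the key bijection -/
private noncomputable def eqv (hsub : Zl n ≤ N) :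
    Ql N × (Fin n → ℕ) ≃ {p : Fin n → ℚ // p ∈ N ∧ ∀ i, 0 ≤ p i} where
  toFun x := ⟨Fl N x.1 + fun i => (x.2 i : ℚ),
    ⟨add_mem (Fl_mem hsub x.1)
        (hsub ((mem_latticeZ _).mpr fun i => ⟨x.2 i, by push_cast; rfl⟩)),
      fun i => add_nonneg (Fl_nonneg x.1 i) (by positivity)⟩⟩
  invFun p := (QuotientAddGroup.mk (⟨(p : Fin n → ℚ), p.2.1⟩ : N),
    fun i => (⌊(p : Fin n → ℚ) i⌋).toNat)
  left_inv := by
    rintro ⟨c, m⟩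
    have hfloor : ∀ i, ⌊Fl N c i + ((m i : ℚ))⌋ = (m i : ℤ) := by
      intro i
      simp only [Fl]
      rw [show ((m i : ℚ)) = ((m i : ℤ) : ℚ) by push_cast; rfl, Int.floor_add_intCast,
        Int.floor_fract]
      simp
    refine Prod.ext ?_ ?_
    · show QuotientAddGroup.mk _ = c
      conv_rhs => rw [← QuotientAddGroup.out_eq' c]
      refine QuotientAddGroup.eq.mpr ?_
      rw [AddSubgroup.mem_addSubgroupOf]
      refine (mem_latticeZ _).mpr fun i => ⟨⌊((c.out : N) : Fin n → ℚ) i⌋ - m i, ?_⟩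
      push_cast
      simp only [AddSubgroup.coe_add, AddSubgroup.coe_neg, Pi.add_apply, Pi.neg_apply]
      show -(Fl N c i + (m i : ℚ)) + ((c.out : N) : Fin n → ℚ) i = _
      have : Fl N c i = ((c.out : N) : Fin n → ℚ) i - ⌊((c.out : N) : Fin n → ℚ) i⌋ := by
        simp only [Fl, ← Int.self_sub_floor]
      rw [this]; ring
    · funext i
      show (⌊Fl N c i + (m i : ℚ)⌋).toNat = m i
      rw [hfloor i, Int.toNat_natCast]
  right_inv := by
    rintro ⟨p, hpN, hp0⟩
    refine Subtype.ext ?_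
    show Fl N (QuotientAddGroup.mk (⟨p, hpN⟩ : N)) + (fun i => ((⌊p i⌋).toNat : ℚ)) = p
    rw [Fl_mk]
    funext i
    simp only [Pi.add_apply]
    have hcast : ((⌊p i⌋.toNat : ℚ)) = ((⌊p i⌋ : ℚ)) := by
      exact_mod_cast congrArg (fun z : ℤ => (z : ℚ))
        (Int.toNat_of_nonneg (Int.floor_nonneg.mpr (hp0 i)))
    rw [hcast]
    exact Int.fract_add_floor (p i)

end Main

/-- Volume limit of the lattice-point generating function: let `N ⊂ ℚ^n` be an
overlattice of `ℤ^n` of finite index `d`, `σ = ℝ^n_{≥0}` and `φ` the linear form with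
`φ(e_i) = 1`.  Then `lim_{q → 1⁺} (q-1)^n ∑_{p ∈ N ∩ σ} q^{-φ(p)} = d`,
the normalized volume `n! · vol_N(σ ∩ {φ ≤ 1}) = [N : ℤ^n]`. -/
theorem volume_limit_overlattice (n : ℕ) (N : AddSubgroup (Fin n → ℚ)) (d : ℕ)
    (hsub : AddSubgroup.closure (Set.range fun i => (Pi.single i 1 : Fin n → ℚ)) ≤ N)
    (hd : (AddSubgroup.closure
        (Set.range fun i => (Pi.single i 1 : Fin n → ℚ))).relIndex N = d)
    (hd0 : d ≠ 0) :
    Tendsto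
      (fun q : ℝ => (q - 1) ^ n *
        ∑' p : {p : Fin n → ℚ // p ∈ N ∧ ∀ i, 0 ≤ p i},
          q ^ (-(∑ i, ((p : Fin n → ℚ) i : ℝ))))
      (nhdsWithin 1 (Set.Ioi 1)) (nhds (d : ℝ)) := by
  have hsub' : Zl n ≤ N := hsub
  have hcard : Nat.card (Ql N) = d := hd
  haveI hfin : Finite (Ql N) := Nat.finite_of_card_ne_zero (by rw [hcard]; exact hd0)
  haveI : Fintype (Ql N) := Fintype.ofFinite _
  set S : Ql N → ℝ := fun c => ∑ i, ((Fl N c i : ℚ) : ℝ) with hS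
  set G : ℝ → ℝ := fun q => q ^ n * ∑ c : Ql N, q ^ (-S c) with hG
  have hGlim : Tendsto G (nhds 1) (nhds (d : ℝ)) := by
    have h1 : Tendsto (fun q : ℝ => q ^ n) (nhds 1) (nhds 1) := by
      simpa using (continuous_pow n).tendsto (1 : ℝ)
    have h2 : Tendsto (fun q : ℝ => ∑ c : Ql N, q ^ (-S c)) (nhds 1)
        (nhds (∑ c : Ql N, (1 : ℝ) ^ (-S c))) := by
      refine tendsto_finset_sum _ fun c _ => ?_
      exact (Real.continuousAt_rpow_const 1 (-S c) (Or.inl one_ne_zero)).tendsto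
    have h3 : (∑ c : Ql N, (1 : ℝ) ^ (-S c)) = (d : ℝ) := by
      simp only [Real.one_rpow]
      rw [Finset.sum_const, Finset.card_univ, ← Nat.card_eq_fintype_card, hcard]
      simp
    have := h1.mul h2
    rw [h3, one_mul] at this
    exact this
  refine tendsto_nhdsWithin_congr ?_ (hGlim.mono_left nhdsWithin_le_nhds)
  intro q hq
  have hq1 : (1:ℝ) < q := hq
  have hq0 : (0:ℝ) < q := lt_trans one_pos hq1
  set r : ℝ := q⁻¹ with hr
  have hr0 : 0 ≤ r := by positivity
  have hr1 : r < 1 := inv_lt_one_of_one_lt₀ hq1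
  have hA : HasSum (fun c : Ql N => q ^ (-S c)) (∑ c : Ql N, q ^ (-S c)) := hasSum_fintype _
  have hB := geom_pi_hasSum hr0 hr1 n
  have hsummul : Summable fun x : Ql N × (Fin n → ℕ) => q ^ (-S x.1) * ∏ i, r ^ x.2 i := by
    apply Summable.mul_of_nonneg hA.summable hB.summable
    · intro c; positivity
    · intro m; exact Finset.prod_nonneg fun i _ => pow_nonneg hr0 _
  have hmul := hA.mul hB hsummul
  have hkey : (fun p : {p : Fin n → ℚ // p ∈ N ∧ ∀ i, 0 ≤ p i} =>
      q ^ (-(∑ i, ((p : Fin n → ℚ) i : ℝ)))) ∘ (eqv hsub')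
      = fun x : Ql N × (Fin n → ℕ) => q ^ (-S x.1) * ∏ i, r ^ x.2 i := by
    funext x
    obtain ⟨c, m⟩ := x
    have hval : ((eqv hsub' (c, m)) : Fin n → ℚ) = Fl N c + fun i => (m i : ℚ) := rfl
    simp only [Function.comp_apply, hval]
    have hsum : (∑ i, (((Fl N c + fun j => (m j : ℚ)) i : ℚ) : ℝ))
        = S c + ∑ i, ((m i : ℕ) : ℝ) := by
      rw [hS]; push_cast [Pi.add_apply]; rw [← Finset.sum_add_distrib]
    rw [hsum, neg_add, Real.rpow_add hq0]
    congr 1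
    rw [show -(∑ i, ((m i : ℕ) : ℝ)) = ∑ i, -((m i : ℕ) : ℝ) by
      rw [Finset.sum_neg_distrib]]
    rw [Real.rpow_sum_of_pos hq0]
    refine Finset.prod_congr rfl fun i _ => ?_
    rw [Real.rpow_neg hq0.le, Real.rpow_natCast, hr, inv_pow]
  have hg : HasSum (fun p : {p : Fin n → ℚ // p ∈ N ∧ ∀ i, 0 ≤ p i} =>
      q ^ (-(∑ i, ((p : Fin n → ℚ) i : ℝ))))
      ((∑ c : Ql N, q ^ (-S c)) * (1 - r)⁻¹ ^ n) :=
    (Equiv.hasSum_iff (eqv hsub')).mp (hkey ▸ hmul)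
  rw [hg.tsum_eq]
  have h1r : 1 - r ≠ 0 := sub_ne_zero.mpr hr1.ne'
  have hq1' : q - 1 ≠ 0 := sub_ne_zero.mpr hq1.ne'
  have hfactor : (q - 1) * (1 - r)⁻¹ = q := by
    rw [hr] at h1r ⊢
    field_simp
  rw [hG]
  rw [mul_comm (∑ c : Ql N, q ^ (-S c)) ((1 - r)⁻¹ ^ n), ← mul_assoc, ← mul_pow, hfactor]
end
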